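/- For a matroid M on [m] with rank function v, if (A_1, …, A_k) is a tuple of independent sets of M whose union B = A_1 ∪ … ∪ A_k is a maximum-size independent set in the k-fold union matroid M_{×k}, and the sizes are balanced (|A_j| ≥ |A_ℓ| − 1 for all j, ℓ), then the maximin share μ(k, [m]) equals min_j |A_j|. -/

import Mathlib

/-! Let `t = min_j |A j|`. Adding the elements outside `⋃ A` to one bundle turns the `A j` into
a partition whose parts have rank at least `t`, so `μ ≥ t`. Conversely, if some partition had
all ranks at least `t + 1`, independent subsets of size exactly `t + 1` of its parts would form
an independent set of size `k (t + 1)` in the `k`-fold union, while balance forces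
`|⋃ A| < k (t + 1)`, contradicting the maximality of `⋃ A`. -/

structure FinMatroid (E : Type*) [Fintype E] [DecidableEq E] where
  Indep : Finset E → Prop
  empty_indep : Indep ∅
  subset_indep : ∀ ⦃I J : Finset E⦄, Indep I → J ⊆ I → Indep J
  aug : ∀ ⦃I J : Finset E⦄, Indep I → Indep J → I.card < J.card →
    ∃ g ∈ J \ I, Indep (insert g I)

noncomputable def FinMatroid.rank {E : Type*} [Fintype E] [DecidableEq E]
    (M : FinMatroid E) (S : Finset E) : ℕ :=
  sSup {t | ∃ I : Finset E, I ⊆ S ∧ M.Indep I ∧ I.card = t}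

/-- Maximin share `μ(k, S)` for a ℕ-valued valuation `v`: the maximum over
`k`-partitions `(Y 0, …, Y (k-1))` of `S` of `min_j v (Y j)`. -/
noncomputable def mmsN {E : Type*} [Fintype E] [DecidableEq E]
    (v : Finset E → ℕ) (k : ℕ) (S : Finset E) : ℕ :=
  sSup {t | ∃ Y : Fin k → Finset E,
    (∀ a b, a ≠ b → Disjoint (Y a) (Y b)) ∧ Finset.univ.biUnion Y = S ∧
    ∀ j, t ≤ v (Y j)}

/-- Rank function of the `k`-fold union of a matroid with itself: the maximum size of a
subset of `S` expressible as a union of `k` independent sets of `M`. -/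
noncomputable def kUnionRank {E : Type*} [Fintype E] [DecidableEq E]
    (M : FinMatroid E) (k : ℕ) (S : Finset E) : ℕ :=
  sSup {t | ∃ J : Fin k → Finset E, (∀ j, M.Indep (J j)) ∧
    Finset.univ.biUnion J ⊆ S ∧ (Finset.univ.biUnion J).card = t}

namespace FinMatroid

variable {E : Type*} [Fintype E] [DecidableEq E] (M : FinMatroid E)

lemma card_le_rank {S I : Finset E} (hIS : I ⊆ S) (hI : M.Indep I) : I.card ≤ M.rank S :=
  le_csSup ⟨S.card, by rintro t ⟨J, hJS, -, rfl⟩; exact Finset.card_le_card hJS⟩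
    ⟨I, hIS, hI, rfl⟩

lemma exists_indep_card_eq_rank (S : Finset E) :
    ∃ I ⊆ S, M.Indep I ∧ I.card = M.rank S :=
  Nat.sSup_mem (s := {t | ∃ I : Finset E, I ⊆ S ∧ M.Indep I ∧ I.card = t})
    ⟨0, ∅, Finset.empty_subset S, M.empty_indep, Finset.card_empty⟩
    ⟨S.card, by rintro t ⟨J, hJS, -, rfl⟩; exact Finset.card_le_card hJS⟩

lemma exists_indep_subset_card_eq {S : Finset E} {c : ℕ} (hc : c ≤ M.rank S) :
    ∃ I ⊆ S, M.Indep I ∧ I.card = c := by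
  obtain ⟨I, hIS, hI, hIcard⟩ := M.exists_indep_card_eq_rank S
  obtain ⟨J, hJI, hJcard⟩ := Finset.exists_subset_card_eq (hIcard ▸ hc)
  exact ⟨J, hJI.trans hIS, M.subset_indep hI hJI, hJcard⟩

end FinMatroid

lemma sum_lt_card_mul_inf'_add_one {ι : Type*} {s : Finset ι} (hs : s.Nonempty) {f : ι → ℕ}
    (hf : ∀ i ∈ s, ∀ j ∈ s, f j ≤ f i + 1) :
    ∑ i ∈ s, f i < s.card * (s.inf' hs f + 1) := by
  obtain ⟨i₀, hi₀, hmin⟩ := Finset.exists_mem_eq_inf' hs f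
  calc ∑ i ∈ s, f i < ∑ _i ∈ s, (s.inf' hs f + 1) :=
        Finset.sum_lt_sum (fun j hj => hmin ▸ hf i₀ hi₀ j hj) ⟨i₀, hi₀, by omega⟩
    _ = s.card * (s.inf' hs f + 1) := by rw [Finset.sum_const, smul_eq_mul]

lemma exists_partition_of_disjoint {E : Type*} [DecidableEq E] {k : ℕ} (hk : 0 < k)
    {S : Finset E} {A : Fin k → Finset E}
    (hA : ∀ a b, a ≠ b → Disjoint (A a) (A b)) (hAS : ∀ j, A j ⊆ S) :
    ∃ Y : Fin k → Finset E, (∀ a b, a ≠ b → Disjoint (Y a) (Y b)) ∧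
      Finset.univ.biUnion Y = S ∧ ∀ j, A j ⊆ Y j := by
  set R := S \ Finset.univ.biUnion A
  have hRA : ∀ j, Disjoint R (A j) := fun j =>
    Finset.sdiff_disjoint.mono_right (Finset.subset_biUnion_of_mem A (Finset.mem_univ j))
  let Y : Fin k → Finset E := fun j => A j ∪ if j = ⟨0, hk⟩ then R else ∅
  refine ⟨Y, fun a b hab => ?_, ?_, fun j => Finset.subset_union_left⟩
  · simp only [Y, Finset.disjoint_union_left, Finset.disjoint_union_right]
    refine ⟨⟨hA a b hab, ?_⟩, ?_, ?_⟩ <;> split_ifs <;> simp_all [Disjoint.symm]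
  · refine Finset.Subset.antisymm
      (Finset.biUnion_subset.mpr fun j _ => Finset.union_subset (hAS j) ?_) fun x hxS => ?_
    · split_ifs
      exacts [Finset.sdiff_subset, Finset.empty_subset S]
    · rw [Finset.mem_biUnion]
      by_cases hx : x ∈ Finset.univ.biUnion A
      · obtain ⟨j, -, hj⟩ := Finset.mem_biUnion.mp hx
        exact ⟨j, Finset.mem_univ _, Finset.mem_union_left _ hj⟩
      · exact ⟨⟨0, hk⟩, Finset.mem_univ _, by simp [Y, R, hxS, hx]⟩

section

variable {E : Type*} [Fintype E] [DecidableEq E]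

lemma card_biUnion_le_kUnionRank (M : FinMatroid E) {k : ℕ} {S : Finset E}
    {J : Fin k → Finset E} (hJ : ∀ j, M.Indep (J j)) (hJS : Finset.univ.biUnion J ⊆ S) :
    (Finset.univ.biUnion J).card ≤ kUnionRank M k S :=
  le_csSup ⟨S.card, by rintro t ⟨J', -, hJ'S, rfl⟩; exact Finset.card_le_card hJ'S⟩
    ⟨J, hJ, hJS, rfl⟩

lemma mul_le_kUnionRank (M : FinMatroid E) {k c : ℕ} {S : Finset E} {Y : Fin k → Finset E}
    (hY : ∀ a b, a ≠ b → Disjoint (Y a) (Y b)) (hYS : ∀ j, Y j ⊆ S)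
    (hc : ∀ j, c ≤ M.rank (Y j)) :
    k * c ≤ kUnionRank M k S := by
  choose I hIY hI hIcard using fun j => M.exists_indep_subset_card_eq (hc j)
  have hIdisj : ((Finset.univ : Finset (Fin k)) : Set (Fin k)).PairwiseDisjoint I :=
    fun a _ b _ hab => (hY a b hab).mono (hIY a) (hIY b)
  calc k * c = (Finset.univ.biUnion I).card := by
        simp [Finset.card_biUnion hIdisj, hIcard]
    _ ≤ kUnionRank M k S := card_biUnion_le_kUnionRank M hI <|
        Finset.biUnion_subset.mpr fun j _ => (hIY j).trans (hYS j)

lemma le_mmsN {v : Finset E → ℕ} {k t : ℕ} (hk : 0 < k) {S : Finset E}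
    {Y : Fin k → Finset E} (hY : ∀ a b, a ≠ b → Disjoint (Y a) (Y b))
    (hYS : Finset.univ.biUnion Y = S) (ht : ∀ j, t ≤ v (Y j)) :
    t ≤ mmsN v k S :=
  le_csSup ⟨Finset.univ.sup v, by
      rintro s ⟨Z, -, -, hZ⟩
      exact (hZ ⟨0, hk⟩).trans (Finset.le_sup (Finset.mem_univ _))⟩
    ⟨Y, hY, hYS, ht⟩

lemma mmsN_le {v : Finset E → ℕ} {k b : ℕ} {S : Finset E}
    (h : ∀ Y : Fin k → Finset E, (∀ a b, a ≠ b → Disjoint (Y a) (Y b)) →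
      Finset.univ.biUnion Y = S → ∃ j, v (Y j) ≤ b) :
    mmsN v k S ≤ b :=
  csSup_le' <| by
    rintro t ⟨Y, hY, hYS, ht⟩
    obtain ⟨j, hj⟩ := h Y hY hYS
    exact (ht j).trans hj

end

/-- If pairwise disjoint independent sets `A 0, …, A (k-1)` have balanced sizes and
their union is a maximum-size independent set of the `k`-fold union matroid, then the
maximin share `μ(k, [m])` equals the minimum bundle size. -/
theorem stmt9 {E : Type*} [Fintype E] [DecidableEq E] (M : FinMatroid E)
    {k : ℕ} (hk : 0 < k) (A : Fin k → Finset E)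
    (hdisj : ∀ a b, a ≠ b → Disjoint (A a) (A b))
    (hind : ∀ j, M.Indep (A j))
    (hbal : ∀ j l, (A l).card ≤ (A j).card + 1)
    (hmax : (Finset.univ.biUnion A).card = kUnionRank M k Finset.univ) :
    mmsN M.rank k Finset.univ =
      Finset.univ.inf' ⟨⟨0, hk⟩, Finset.mem_univ _⟩ (fun j => (A j).card) := by
  set t := Finset.univ.inf' ⟨⟨0, hk⟩, Finset.mem_univ _⟩ (fun j => (A j).card) with ht
  apply le_antisymm
  · refine mmsN_le fun Y hY _ => ?_
    by_contra! hrank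
    have hbig : k * (t + 1) ≤ kUnionRank M k Finset.univ :=
      mul_le_kUnionRank M hY (fun j => Finset.subset_univ _) hrank
    have hsmall : ∑ j, (A j).card < k * (t + 1) := by
      simpa [ht] using sum_lt_card_mul_inf'_add_one ⟨⟨0, hk⟩, Finset.mem_univ _⟩
        (f := fun j => (A j).card) fun j _ l _ => hbal j l
    rw [← hmax, Finset.card_biUnion fun a _ b _ hab => hdisj a b hab] at hbig
    omega
  · obtain ⟨Y, hY, hYS, hAY⟩ :=
      exists_partition_of_disjoint hk hdisj fun j => Finset.subset_univ _
    exact le_mmsN hk hY hYS fun j =>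
      (Finset.inf'_le _ (Finset.mem_univ j)).trans (M.card_le_rank (hAY j) (hind j))
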